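/- For every integer n ≥ 3, the spectral radius of the matrix M_n equals the spectral radius of the compacted matrix C_n of rank n. -/

import Mathlib

/-- The spectral radius of a square real matrix: the maximum (supremum) of the
moduli of its complex eigenvalues. -/
noncomputable def specRad {m : Type*} [Fintype m] [DecidableEq m]
    (M : Matrix m m ℝ) : ℝ :=
  sSup {x : ℝ | ∃ z ∈ spectrum ℂ (M.map (algebraMap ℝ ℂ)), ‖z‖ = x}

/-- `t` lies in the cyclic interval from `a` to `b` in `ℤ/m` (indices reduced mod `m`). -/
def inCyc (m t a b : ℕ) : Prop :=
  (t + m - a % m) % m ≤ (b % m + m - a % m) % m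

instance (m t a b : ℕ) : Decidable (inCyc m t a b) := by
  unfold inCyc; infer_instance

/-- The defining condition for the entries of the Markov matrix `M_n`:
`Mcond n l t i j` holds iff `m^{(l+1)(t+1)}_{(i+1)(j+1)} = 1`, where `l, t` range
over `{0, …, 2n-1}` and `i, j` over `{0, …, 2n-2}` (zero-indexed versions of the
one-indexed block indices `{1, …, 2n}` and entry indices `{1, …, 2n-1}`). -/
def Mcond (n l t i j : ℕ) : Prop :=
  (i + 1 ≤ n - 3 ∧ j = i + 1 ∧ t = (l + n + 1) % (2 * n)) ∨
  (i = n - 3 ∧ (j = n - 2 ∨ j = n - 1) ∧ t = (l + n + 1) % (2 * n)) ∨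
  (i = n - 2 ∧ ((n ≤ j ∧ t = (l + n + 1) % (2 * n)) ∨
      inCyc (2 * n) t (l + n + 2) (l + 2 * n - 1))) ∨
  (i = n - 1 ∧ t = l) ∨
  (i = n ∧ ((j + 2 ≤ n ∧ t = (l + n - 1) % (2 * n)) ∨
      inCyc (2 * n) t (l + 1) (l + n - 2))) ∨
  (i = n + 1 ∧ (j = n - 1 ∨ j = n) ∧ t = (l + n - 1) % (2 * n)) ∨
  (n + 2 ≤ i ∧ j + 1 = i ∧ t = (l + n - 1) % (2 * n))

instance (n l t i j : ℕ) : Decidable (Mcond n l t i j) := by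
  unfold Mcond; infer_instance

/-- The Markov matrix `M_n`, a `2n(2n-1) × 2n(2n-1)` `(0,1)`-matrix written as a
`2n × 2n` array of `(2n-1) × (2n-1)` blocks. -/
def Mmat (n : ℕ) :
    Matrix (Fin (2 * n) × Fin (2 * n - 1)) (Fin (2 * n) × Fin (2 * n - 1)) ℝ :=
  Matrix.of fun p q => if Mcond n p.1.val q.1.val p.2.val q.2.val then 1 else 0

/-- Entry `(i+1, j+1)` of the compacted matrix `C_n` of rank `n` (zero-indexed
`i, j ∈ {0, …, 2n-2}` corresponding to one-indexed indices in `{1, …, 2n-1}`). -/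
def Cfun (n i j : ℕ) : ℝ :=
  if i + 1 ≤ n - 3 ∧ j = i + 1 then 1
  else if i = n - 3 ∧ (j = n - 2 ∨ j = n - 1) then 1
  else if i = n - 2 ∧ j + 1 ≤ n then (n : ℝ) - 2
  else if i = n - 2 ∧ n ≤ j then (n : ℝ) - 1
  else if i = n - 1 then 1
  else if i = n ∧ j + 2 ≤ n then (n : ℝ) - 1
  else if i = n ∧ n - 1 ≤ j then (n : ℝ) - 2
  else if i = n + 1 ∧ (j = n - 1 ∨ j = n) then 1
  else if n + 2 ≤ i ∧ j + 1 = i then 1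
  else 0

/-- The compacted matrix `C_n` of rank `n`, of size `(2n-1) × (2n-1)`. -/
def Cmat (n : ℕ) : Matrix (Fin (2 * n - 1)) (Fin (2 * n - 1)) ℝ :=
  Matrix.of fun i j => Cfun n i.val j.val

/-!
Summing the blocks of each block row of `M_n` gives `C_n`: for every block row `l` and every
entry `(i, j)`, the number of block columns `t` with `m^{lt}_{ij} = 1` is `c_{ij}` (the entries
`n - 2` and `n - 1` count the points of a cyclic interval of length `n - 2`, plus possibly one
more block). This identity `∑ₜ M_{lt} = C` propagates to all powers, `∑ₜ (M^p)_{lt} = C^p`, so,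
`M_n` being nonnegative, `M_n^p` and `C_n^p` have the same maximal absolute row sum. Gelfand's
formula `ρ(A) = lim ‖A^p‖^{1/p}` for the `ℓ^∞` operator norm then gives `ρ(M_n) = ρ(C_n)`.
-/

open Finset

section CyclicInterval

variable {m a b : ℕ}

lemma add_mod_add_sub_mod_mod {s : ℕ} (a : ℕ) (hs : s < m) :
    ((s + a) % m + m - a % m) % m = s := by
  have h : (s + a) % m + m - a % m ≡ s [MOD m] := by
    refine Nat.ModEq.add_right_cancel' (a % m) ?_
    rw [Nat.sub_add_cancel (by have := Nat.mod_lt a (by omega : 0 < m); omega)]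
    calc (s + a) % m + m ≡ s + a [MOD m] := by simp [Nat.ModEq]
      _ ≡ s + a % m [MOD m] := (Nat.mod_modEq a m).symm.add_left s
  rwa [Nat.ModEq, Nat.mod_eq_of_lt hs] at h

lemma add_sub_mod_add_mod {t : ℕ} (a : ℕ) (ht : t < m) :
    ((t + m - a % m) % m + a) % m = t := by
  have h : (t + m - a % m) % m + a ≡ t [MOD m] :=
    calc (t + m - a % m) % m + a ≡ t + m - a % m + a % m [MOD m] :=
          (Nat.mod_modEq _ m).add (Nat.mod_modEq a m).symm
      _ = t + m := Nat.sub_add_cancel (by have := Nat.mod_lt a (by omega : 0 < m); omega)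
      _ ≡ t [MOD m] := by simp [Nat.ModEq]
  rwa [Nat.ModEq, Nat.mod_eq_of_lt ht] at h

lemma inCyc_iff (hab : a ≤ b) (hba : b < a + m) (t : ℕ) :
    inCyc m t a b ↔ (t + m - a % m) % m ≤ b - a := by
  have hb : b = b - a + a := (Nat.sub_add_cancel hab).symm
  rw [inCyc, hb, Nat.add_sub_cancel, add_mod_add_sub_mod_mod a (by omega)]

lemma inCyc_add_mod_iff (hab : a ≤ b) (hba : b < a + m) {k : ℕ} (hk : k < m) :
    inCyc m ((k + a) % m) a b ↔ k ≤ b - a := by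
  rw [inCyc_iff hab hba, add_mod_add_sub_mod_mod a hk]

lemma card_filter_inCyc (hab : a ≤ b) (hba : b < a + m) :
    #{t ∈ range m | inCyc m t a b} = b - a + 1 := by
  rw [← card_range (b - a + 1)]
  refine card_nbij' (fun t => (t + m - a % m) % m) (fun s => (s + a) % m) ?_ ?_ ?_ ?_
  · intro t ht
    simp only [coe_filter, mem_range, Set.mem_ofPred_eq, inCyc_iff hab hba] at ht
    simp only [coe_range, Set.mem_Iio]
    omega
  · intro s hs
    simp only [coe_range, Set.mem_Iio] at hs
    simp only [coe_filter, mem_range, Set.mem_ofPred_eq,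
      inCyc_add_mod_iff hab hba (by omega : s < m)]
    exact ⟨Nat.mod_lt _ (by omega), by omega⟩
  · intro t ht
    simp only [coe_filter, mem_range, Set.mem_ofPred_eq] at ht
    exact add_sub_mod_add_mod a ht.1
  · intro s hs
    simp only [coe_range, Set.mem_Iio] at hs
    exact add_mod_add_sub_mod_mod a (by omega)

lemma card_filter_and_eq (P : Prop) [Decidable P] {c : ℕ} (hc : c < m) :
    #{t ∈ range m | P ∧ t = c} = if P then 1 else 0 := by
  split_ifs with h <;> simp [h, filter_eq', hc]

lemma card_filter_and_eq_or_inCyc (P : Prop) [Decidable P] {c : ℕ} (hab : a ≤ b)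
    (hba : b < a + m) (hc : c < m) (hca : ¬ inCyc m c a b) :
    #{t ∈ range m | (P ∧ t = c) ∨ inCyc m t a b} = (if P then 1 else 0) + (b - a + 1) := by
  rw [filter_or, card_union_of_disjoint, card_filter_and_eq P hc, card_filter_inCyc hab hba]
  exact disjoint_filter.2 fun t _ ht => ht.2 ▸ hca

end CyclicInterval

section RowSums

variable {n : ℕ}

lemma Cfun_of_lt_sub_two {i : ℕ} (hi : i < n - 2) (j : ℕ) :
    Cfun n i j = ((if (i + 1 ≤ n - 3 ∧ j = i + 1) ∨ (i = n - 3 ∧ (j = n - 2 ∨ j = n - 1))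
      then 1 else 0 : ℕ) : ℝ) := by
  unfold Cfun
  split_ifs <;> first | omega | norm_num

lemma Cfun_sub_two_left (hn : 3 ≤ n) (j : ℕ) :
    Cfun n (n - 2) j = (((if n ≤ j then 1 else 0) + (n - 2) : ℕ) : ℝ) := by
  unfold Cfun
  split_ifs <;> first | omega | (push_cast [Nat.cast_sub (by omega : 2 ≤ n)]; ring)

lemma Cfun_sub_one_left (hn : 3 ≤ n) (j : ℕ) : Cfun n (n - 1) j = 1 := by
  unfold Cfun
  split_ifs <;> first | omega | rfl

lemma Cfun_self_left (hn : 3 ≤ n) (j : ℕ) :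
    Cfun n n j = (((if j + 2 ≤ n then 1 else 0) + (n - 2) : ℕ) : ℝ) := by
  unfold Cfun
  split_ifs <;> first | omega | (push_cast [Nat.cast_sub (by omega : 2 ≤ n)]; ring)

lemma Cfun_of_gt (hn : 3 ≤ n) {i : ℕ} (hi : n < i) (j : ℕ) :
    Cfun n i j = ((if (i = n + 1 ∧ (j = n - 1 ∨ j = n)) ∨ (n + 2 ≤ i ∧ j + 1 = i)
      then 1 else 0 : ℕ) : ℝ) := by
  unfold Cfun
  split_ifs <;> first | omega | norm_num

variable {l : ℕ}

lemma card_filter_Mcond_sub_two (hn : 3 ≤ n) (j : ℕ) :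
    (#{t ∈ range (2 * n) | Mcond n l t (n - 2) j} : ℝ) = Cfun n (n - 2) j := by
  have hab : l + n + 2 ≤ l + 2 * n - 1 := by omega
  have hba : l + 2 * n - 1 < l + n + 2 + 2 * n := by omega
  have key (t : ℕ) : Mcond n l t (n - 2) j ↔
      (n ≤ j ∧ t = (l + n + 1) % (2 * n)) ∨ inCyc (2 * n) t (l + n + 2) (l + 2 * n - 1) := by
    unfold Mcond inCyc; omega
  -- `l + n + 1 ≡ (l + n + 2) + (2n - 1)`: the extra block lies just before the interval.
  have hc : ¬ inCyc (2 * n) ((l + n + 1) % (2 * n)) (l + n + 2) (l + 2 * n - 1) := by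
    have h := inCyc_add_mod_iff hab hba (k := 2 * n - 1) (by omega)
    rw [show 2 * n - 1 + (l + n + 2) = l + n + 1 + 2 * n by omega, Nat.add_mod_right] at h
    rw [h]; omega
  rw [filter_congr fun t _ => key t,
    card_filter_and_eq_or_inCyc _ hab hba (Nat.mod_lt _ (by omega)) hc,
    Cfun_sub_two_left hn, show l + 2 * n - 1 - (l + n + 2) + 1 = n - 2 by omega]

lemma card_filter_Mcond_self (hn : 3 ≤ n) (j : ℕ) :
    (#{t ∈ range (2 * n) | Mcond n l t n j} : ℝ) = Cfun n n j := by
  have hab : l + 1 ≤ l + n - 2 := by omega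
  have hba : l + n - 2 < l + 1 + 2 * n := by omega
  have key (t : ℕ) : Mcond n l t n j ↔
      (j + 2 ≤ n ∧ t = (l + n - 1) % (2 * n)) ∨ inCyc (2 * n) t (l + 1) (l + n - 2) := by
    unfold Mcond inCyc; omega
  -- `l + n - 1 = (l + 1) + (n - 2)`: the extra block lies just after the interval.
  have hc : ¬ inCyc (2 * n) ((l + n - 1) % (2 * n)) (l + 1) (l + n - 2) := by
    have h := inCyc_add_mod_iff hab hba (k := n - 2) (by omega)
    rw [show n - 2 + (l + 1) = l + n - 1 by omega] at h
    rw [h]; omega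
  rw [filter_congr fun t _ => key t,
    card_filter_and_eq_or_inCyc _ hab hba (Nat.mod_lt _ (by omega)) hc,
    Cfun_self_left hn, show l + n - 2 - (l + 1) + 1 = n - 2 by omega]

lemma card_filter_Mcond (hn : 3 ≤ n) (hl : l < 2 * n) (i j : ℕ) :
    (#{t ∈ range (2 * n) | Mcond n l t i j} : ℝ) = Cfun n i j := by
  have hm : 0 < 2 * n := by omega
  obtain hi | rfl | rfl | rfl | hi : i < n - 2 ∨ i = n - 2 ∨ i = n - 1 ∨ n = i ∨ n < i := by
    omega
  · have key (t : ℕ) : Mcond n l t i j ↔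
        ((i + 1 ≤ n - 3 ∧ j = i + 1) ∨ (i = n - 3 ∧ (j = n - 2 ∨ j = n - 1))) ∧
          t = (l + n + 1) % (2 * n) := by
      unfold Mcond; omega
    rw [filter_congr fun t _ => key t, card_filter_and_eq _ (Nat.mod_lt _ hm),
      Cfun_of_lt_sub_two hi]
  · exact card_filter_Mcond_sub_two hn j
  · have key (t : ℕ) : Mcond n l t (n - 1) j ↔ t = l := by
      unfold Mcond; omega
    rw [filter_congr fun t _ => key t, filter_eq', if_pos (mem_range.2 hl), card_singleton,
      Cfun_sub_one_left hn, Nat.cast_one]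
  · exact card_filter_Mcond_self hn j
  · have key (t : ℕ) : Mcond n l t i j ↔
        ((i = n + 1 ∧ (j = n - 1 ∨ j = n)) ∨ (n + 2 ≤ i ∧ j + 1 = i)) ∧
          t = (l + n - 1) % (2 * n) := by
      unfold Mcond; omega
    rw [filter_congr fun t _ => key t, card_filter_and_eq _ (Nat.mod_lt _ hm), Cfun_of_gt hn hi]

end RowSums

lemma spectralRadius_eq_of_nnnorm_pow_eq {A B : Type*} [NormedRing A] [NormedAlgebra ℂ A]
    [CompleteSpace A] [NormedRing B] [NormedAlgebra ℂ B] [CompleteSpace B] {a : A} {b : B}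
    (h : ∀ p : ℕ, ‖a ^ p‖₊ = ‖b ^ p‖₊) : spectralRadius ℂ a = spectralRadius ℂ b :=
  tendsto_nhds_unique (spectrum.pow_nnnorm_pow_one_div_tendsto_nhds_spectralRadius a) <| by
    simpa only [h] using spectrum.pow_nnnorm_pow_one_div_tendsto_nhds_spectralRadius b

section SpectralRadius

open Matrix
open scoped ENNReal

attribute [local instance] Matrix.linftyOpNormedAddCommGroup Matrix.linftyOpNormedRing
  Matrix.linftyOpNormedAlgebra

variable {K : Type*} [Fintype K] [DecidableEq K]

lemma specRad_eq_toReal_spectralRadius [Nonempty K] (M : Matrix K K ℝ) :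
    specRad M = (spectralRadius ℂ (M.map (algebraMap ℝ ℂ))).toReal := by
  obtain ⟨z, hz, hzr⟩ := spectrum.exists_nnnorm_eq_spectralRadius (M.map (algebraMap ℝ ℂ))
  rw [← hzr, ENNReal.coe_toReal, coe_nnnorm]
  refine IsGreatest.csSup_eq ⟨⟨z, hz, rfl⟩, ?_⟩
  rintro _ ⟨w, hw, rfl⟩
  have : (‖w‖₊ : ℝ≥0∞) ≤ ‖z‖₊ := hzr ▸ le_iSup₂ (α := ℝ≥0∞) w hw
  exact_mod_cast this

variable {L I : Type*} [Fintype L] [Fintype I] [DecidableEq L] [DecidableEq I]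

lemma sum_pow_apply_eq_of_sum_apply_eq {R : Type*} [Semiring R] {M : Matrix (L × I) (L × I) R}
    {C : Matrix I I R} (hMC : ∀ l i j, ∑ t, M (l, i) (t, j) = C i j) (p : ℕ) (l : L) (i j : I) :
    ∑ t, (M ^ p) (l, i) (t, j) = (C ^ p) i j := by
  induction p generalizing j with
  | zero => by_cases h : i = j <;> simp [one_apply, Prod.ext_iff, h]
  | succ p ih =>
    calc ∑ t, (M ^ (p + 1)) (l, i) (t, j)
        = ∑ x : L × I, (M ^ p) (l, i) x * ∑ t, M x (t, j) := by
          simp only [pow_succ, mul_apply, mul_sum]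
          exact sum_comm
      _ = ∑ k, (∑ s, (M ^ p) (l, i) (s, k)) * C k j := by
          simp only [hMC, Fintype.sum_prod_type, sum_mul]
          exact sum_comm
      _ = (C ^ (p + 1)) i j := by simp only [ih, pow_succ, mul_apply]

lemma nnnorm_map_eq_of_sum_apply_eq [Nonempty L] {M : Matrix (L × I) (L × I) ℝ}
    {C : Matrix I I ℝ} (hM : ∀ x y, 0 ≤ M x y) (hMC : ∀ l i j, ∑ t, M (l, i) (t, j) = C i j) :
    ‖M.map (algebraMap ℝ ℂ)‖₊ = ‖C.map (algebraMap ℝ ℂ)‖₊ := by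
  have hrow (x : L × I) :
      ∑ y, ‖(M.map (algebraMap ℝ ℂ)) x y‖₊ = ∑ j, ‖(C.map (algebraMap ℝ ℂ)) x.2 j‖₊ := by
    simp only [map_apply, Complex.coe_algebraMap, Complex.nnnorm_real, Fintype.sum_prod_type]
    rw [sum_comm]
    refine sum_congr rfl fun j _ => NNReal.eq ?_
    simp only [NNReal.coe_sum, coe_nnnorm, Real.norm_eq_abs, ← hMC x.1 x.2 j]
    rw [abs_sum_of_nonneg' fun t => hM _ _]
    exact sum_congr rfl fun t _ => abs_of_nonneg (hM _ _)
  rw [linfty_opNNNorm_def, linfty_opNNNorm_def, sup_congr rfl fun x _ => hrow x,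
    ← univ_product_univ, sup_product_left]
  exact sup_const univ_nonempty (univ.sup fun i => ∑ j, ‖C.map (algebraMap ℝ ℂ) i j‖₊)

theorem specRad_eq_of_sum_apply_eq [Nonempty L] [Nonempty I] {M : Matrix (L × I) (L × I) ℝ}
    {C : Matrix I I ℝ} (hM : ∀ x y, 0 ≤ M x y) (hMC : ∀ l i j, ∑ t, M (l, i) (t, j) = C i j) :
    specRad M = specRad C := by
  rw [specRad_eq_toReal_spectralRadius, specRad_eq_toReal_spectralRadius]
  congr 1
  refine spectralRadius_eq_of_nnnorm_pow_eq fun p => ?_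
  rw [← Matrix.map_pow, ← Matrix.map_pow]
  exact nnnorm_map_eq_of_sum_apply_eq (pow_apply_nonneg hM p)
    (sum_pow_apply_eq_of_sum_apply_eq hMC p)

end SpectralRadius

lemma Mmat_nonneg (n : ℕ) (x y : Fin (2 * n) × Fin (2 * n - 1)) : 0 ≤ Mmat n x y := by
  unfold Mmat
  rw [Matrix.of_apply]
  split_ifs <;> norm_num

lemma sum_Mmat_apply {n : ℕ} (hn : 3 ≤ n) (l : Fin (2 * n)) (i j : Fin (2 * n - 1)) :
    ∑ t, Mmat n (l, i) (t, j) = Cmat n i j := by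
  simp only [Mmat, Cmat, Matrix.of_apply]
  rw [Fin.sum_univ_eq_sum_range (fun t => if Mcond n l t i j then (1 : ℝ) else 0), sum_boole,
    card_filter_Mcond hn l.isLt]

theorem stmt6 (n : ℕ) (hn : 3 ≤ n) :
    specRad (Mmat n) = specRad (Cmat n) := by
  have : Nonempty (Fin (2 * n)) := ⟨⟨0, by omega⟩⟩
  have : Nonempty (Fin (2 * n - 1)) := ⟨⟨0, by omega⟩⟩
  exact specRad_eq_of_sum_apply_eq (Mmat_nonneg n) (sum_Mmat_apply hn)
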